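/- If λ_d < λ_f < 2λ_d, λ_d/λ_f < γ, and η > 1/(1 + (1-λ_d/λ_f)/ln(1/(2(1-λ_d/λ_f)))), then the expression (λ_f/(2λ_d))·(γ + z(β/(1-η+β) - γ)) - 1/2, with β = -(η λ_d/λ_f)/ln(2-2λ_d/λ_f), is strictly positive at z = 0 and at z = 1, and hence (being affine in z) strictly positive for all z ∈ [0,1]. -/

import Mathlib

/-! With `r = λ_d/λ_f ∈ (1/2, 1)` and `ℓ = log (1/(2(1-r))) > 0` one has `β = η r / ℓ`, and
the expression is `(λ_f/(2λ_d)) · x - 1/2` with `x` moving affinely from `γ` to `β/(1-η+β)`; it is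
positive exactly when `x > r`. At `z = 0` this is `γ > r`. At `z = 1`, clearing denominators,
`β/(1-η+β) > r` becomes `ℓ < η (ℓ + 1 - r)`, which is the hypothesis on `η` multiplied out. -/

open Real

lemma one_div_one_add_div_lt_iff {L d η : ℝ} (hL : 0 < L) (hd : 0 < d) :
    1 / (1 + d / L) < η ↔ L < η * (L + d) := by
  rw [show 1 / (1 + d / L) = L / (L + d) by field_simp, div_lt_iff₀ (by positivity)]

lemma lt_div_one_sub_add {r η L : ℝ} (hr0 : 0 < r) (hr1 : r < 1) (hL : 0 < L) (hη1 : η < 1)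
    (h : L < η * (L + (1 - r))) :
    r < η * r / L / (1 - η + η * r / L) := by
  have hη0 : 0 < η := pos_of_mul_pos_left (hL.trans h) (by linarith)
  have hβ : 0 < η * r / L := by positivity
  rw [lt_div_iff₀ (by linarith)]
  -- `r (1 - η + β) < β` is `r (1 - η) < β (1 - r)`, i.e. `r (1 - η) L < η r (1 - r)`
  have hcross : r * (1 - η) * L < η * r * (1 - r) := by nlinarith
  have hβL : η * r / L * L = η * r := div_mul_cancel₀ _ hL.ne'
  nlinarith

lemma div_two_mul_mul_sub_half_pos_iff {a b x : ℝ} (ha : 0 < a) (hb : 0 < b) :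
    0 < b / (2 * a) * x - 1 / 2 ↔ a / b < x := by
  rw [sub_pos, div_lt_iff₀ hb, div_mul_eq_mul_div, lt_div_iff₀ (by positivity)]
  constructor <;> intro h <;> linarith

lemma affine_pos_of_endpoints_pos {a c g b z : ℝ} (hz : z ∈ Set.Icc (0 : ℝ) 1)
    (hg : 0 < a * g - c) (hb : 0 < a * b - c) :
    0 < a * (g + z * (b - g)) - c := by
  have hconv : a * (g + z * (b - g)) - c = (1 - z) * (a * g - c) + z * (a * b - c) := by ring
  rcases hz with ⟨hz0, hz1⟩
  rcases hz0.eq_or_lt with rfl | hz0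
  · simpa using hg
  · rw [hconv]
    exact add_pos_of_nonneg_of_pos (mul_nonneg (by linarith) hg.le) (mul_pos hz0 hb)

theorem stmt19_general (lamd lamf eta gamma : ℝ) (hd : 0 < lamd)
    (heta1 : eta < 1)
    (h1 : lamd < lamf) (h2 : lamf < 2 * lamd)
    (hgam : lamd / lamf < gamma)
    (heta : 1 / (1 + (1 - lamd / lamf) / Real.log (1 / (2 * (1 - lamd / lamf)))) < eta)
    (beta : ℝ) (hbeta : beta = -(eta * lamd / lamf) / Real.log (2 - 2 * lamd / lamf)) :
    (0 < lamf / (2 * lamd) * (gamma + 0 * (beta / (1 - eta + beta) - gamma)) - 1 / 2) ∧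
    (0 < lamf / (2 * lamd) * (gamma + 1 * (beta / (1 - eta + beta) - gamma)) - 1 / 2) ∧
    ∀ z ∈ Set.Icc (0 : ℝ) 1,
      0 < lamf / (2 * lamd) * (gamma + z * (beta / (1 - eta + beta) - gamma)) - 1 / 2 := by
  have hf : 0 < lamf := hd.trans h1
  set r := lamd / lamf with hr
  have hr0 : 0 < r := div_pos hd hf
  have hr1 : r < 1 := (div_lt_one hf).2 h1
  have hr2 : 1 / 2 < r := by rw [hr, lt_div_iff₀ hf]; linarith
  set L := log (1 / (2 * (1 - r)))
  have hL : 0 < L := log_pos (by rw [lt_div_iff₀ (by linarith)]; linarith)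
  have hbeta' : beta = eta * r / L := by
    rw [hbeta, show 2 - 2 * lamd / lamf = (1 / (2 * (1 - r)))⁻¹ by rw [one_div, inv_inv, hr]; ring,
      log_inv, neg_div_neg_eq, mul_div_assoc]
  have hgamma : 0 < lamf / (2 * lamd) * gamma - 1 / 2 :=
    (div_two_mul_mul_sub_half_pos_iff hd hf).2 hgam
  have hlimit : 0 < lamf / (2 * lamd) * (beta / (1 - eta + beta)) - 1 / 2 := by
    refine (div_two_mul_mul_sub_half_pos_iff hd hf).2 ?_
    rw [hbeta']
    exact lt_div_one_sub_add hr0 hr1 hL heta1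
      ((one_div_one_add_div_lt_iff hL (by linarith)).1 heta)
  have hall := fun z (hz : z ∈ Set.Icc (0 : ℝ) 1) => affine_pos_of_endpoints_pos hz hgamma hlimit
  exact ⟨hall 0 (by simp), hall 1 (by simp), hall⟩

theorem stmt19 (lamd lamf eta gamma : ℝ) (hd : 0 < lamd) (hf : 0 < lamf)
    (hg : 0 < gamma) (heta0 : 0 < eta) (heta1 : eta < 1)
    (h1 : lamd < lamf) (h2 : lamf < 2 * lamd)
    (hgam : lamd / lamf < gamma)
    (heta : 1 / (1 + (1 - lamd / lamf) / Real.log (1 / (2 * (1 - lamd / lamf)))) < eta)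
    (beta : ℝ) (hbeta : beta = -(eta * lamd / lamf) / Real.log (2 - 2 * lamd / lamf)) :
    (0 < lamf / (2 * lamd) * (gamma + 0 * (beta / (1 - eta + beta) - gamma)) - 1 / 2) ∧
    (0 < lamf / (2 * lamd) * (gamma + 1 * (beta / (1 - eta + beta) - gamma)) - 1 / 2) ∧
    ∀ z ∈ Set.Icc (0 : ℝ) 1,
      0 < lamf / (2 * lamd) * (gamma + z * (beta / (1 - eta + beta) - gamma)) - 1 / 2 :=
  stmt19_general lamd lamf eta gamma hd heta1 h1 h2 hgam heta beta hbeta
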